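/- For every p with 1/3 < p ≤ 1, the two-qubit Werner state ρ_p = p·|Ψ⁻⟩⟨Ψ⁻| + ((1−p)/4)·I₄ has a partial transpose over the second factor that is not positive semidefinite; consequently ρ_p is not separable. -/

import Mathlib

open Matrix Kronecker
open scoped ComplexOrder

noncomputable section

/-- A density matrix: positive semidefinite with unit trace. -/
def IsDensityMatrix {d : Type*} [Fintype d] [DecidableEq d] (ρ : Matrix d d ℂ) : Prop :=
  ρ.PosSemidef ∧ ρ.trace = 1

/-- A density matrix on `ℂ^m ⊗ ℂ^n` is separable if it is a finite convex combination
of Kronecker products of density matrices on the factors. -/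
def IsSepState {m n : ℕ} (ρ : Matrix (Fin m × Fin n) (Fin m × Fin n) ℂ) : Prop :=
  ∃ (k : ℕ) (p : Fin k → ℝ) (σ : Fin k → Matrix (Fin m) (Fin m) ℂ)
    (τ : Fin k → Matrix (Fin n) (Fin n) ℂ),
    (∀ i, 0 ≤ p i) ∧ (∑ i, p i = 1) ∧
    (∀ i, IsDensityMatrix (σ i)) ∧ (∀ i, IsDensityMatrix (τ i)) ∧
    ρ = ∑ i, ((p i : ℂ)) • ((σ i) ⊗ₖ (τ i))

/-- Partial transpose over the second tensor factor:
`(M^{T_B})_{(i,j),(i',j')} = M_{(i,j'),(i',j)}`. -/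
def ptransposeB {m n : ℕ} (M : Matrix (Fin m × Fin n) (Fin m × Fin n) ℂ) :
    Matrix (Fin m × Fin n) (Fin m × Fin n) ℂ :=
  Matrix.of fun p q => M (p.1, q.2) (q.1, p.2)

/-- The singlet state `|Ψ⁻⟩ = (|01⟩ − |10⟩)/√2` in `ℂ² ⊗ ℂ²`. -/
def psiMinus : Fin 2 × Fin 2 → ℂ :=
  fun p => if p = (0, 1) then ((Real.sqrt 2)⁻¹ : ℝ) else
           if p = (1, 0) then -(((Real.sqrt 2)⁻¹ : ℝ) : ℂ) else 0

/-- The two-qubit Werner state `ρ_p = p·|Ψ⁻⟩⟨Ψ⁻| + ((1−p)/4)·I₄`. -/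
def wernerState (p : ℝ) : Matrix (Fin 2 × Fin 2) (Fin 2 × Fin 2) ℂ :=
  (p : ℂ) • Matrix.vecMulVec psiMinus (star psiMinus) +
    (((1 - p) / 4 : ℝ) : ℂ) • 1

/-!
Partial transposition sends `σ ⊗ τ` to `σ ⊗ τᵀ`, which is again positive semidefinite, so every
separable state has positive semidefinite partial transpose (the Peres criterion). On the other hand,
the expectation of `Mᵀᴮ` in the unnormalised maximally entangled vector `∑ᵢ |ii⟩` is
`∑ᵢⱼ M_{(i,j),(j,i)}`, which for the Werner state is `(1 - 3p)/2 < 0` as soon as `p > 1/3`.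
-/

section PartialTranspose

variable {m n : ℕ}

theorem ptransposeB_kronecker (A : Matrix (Fin m) (Fin m) ℂ) (B : Matrix (Fin n) (Fin n) ℂ) :
    ptransposeB (A ⊗ₖ B) = A ⊗ₖ Bᵀ := by
  ext ⟨i, j⟩ ⟨i', j'⟩
  simp [ptransposeB, kroneckerMap_apply]

theorem ptransposeB_smul (c : ℂ) (M : Matrix (Fin m × Fin n) (Fin m × Fin n) ℂ) :
    ptransposeB (c • M) = c • ptransposeB M :=
  rfl

theorem ptransposeB_sum {ι : Type*} (s : Finset ι)
    (M : ι → Matrix (Fin m × Fin n) (Fin m × Fin n) ℂ) :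
    ptransposeB (∑ i ∈ s, M i) = ∑ i ∈ s, ptransposeB (M i) := by
  ext x y
  simp [ptransposeB, Matrix.sum_apply]

theorem IsSepState.posSemidef_ptransposeB {ρ : Matrix (Fin m × Fin n) (Fin m × Fin n) ℂ}
    (hρ : IsSepState ρ) : (ptransposeB ρ).PosSemidef := by
  obtain ⟨k, w, σ, τ, hw, -, hσ, hτ, rfl⟩ := hρ
  rw [ptransposeB_sum]
  refine posSemidef_sum _ fun i _ => ?_
  rw [ptransposeB_smul, ptransposeB_kronecker]
  exact ((hσ i).1.kronecker (hτ i).1.transpose).smul (Complex.zero_le_real.mpr (hw i))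

def maxEntangledVec (n : ℕ) : Fin n × Fin n → ℂ :=
  fun q => if q.1 = q.2 then 1 else 0

theorem star_maxEntangledVec_dotProduct_ptransposeB_mulVec
    (M : Matrix (Fin n × Fin n) (Fin n × Fin n) ℂ) :
    star (maxEntangledVec n) ⬝ᵥ (ptransposeB M *ᵥ maxEntangledVec n)
      = ∑ i, ∑ j, M (i, j) (j, i) := by
  simp [dotProduct, mulVec, Fintype.sum_prod_type, maxEntangledVec, ptransposeB]

end PartialTranspose

theorem sum_wernerState_apply_swap (p : ℝ) :
    ∑ i, ∑ j, wernerState p (i, j) (j, i) = ((1 - 3 * p) / 2 : ℝ) := by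
  have hsqrt : ((√2 : ℝ) : ℂ)⁻¹ * ((√2 : ℝ) : ℂ)⁻¹ = 1 / 2 := by
    rw [← mul_inv, ← Complex.ofReal_mul, Real.mul_self_sqrt zero_le_two]
    norm_num
  simp only [Fin.sum_univ_two, wernerState, Matrix.add_apply, Matrix.smul_apply, vecMulVec_apply,
    one_apply, psiMinus, Pi.star_apply, Prod.mk.injEq, Fin.isValue, zero_ne_one, one_ne_zero, and_self,
    and_false, false_and, if_true, if_false, map_neg, map_zero, Complex.star_def, Complex.conj_ofReal]
  push_cast
  linear_combination (-2 * p : ℂ) * hsqrt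

theorem not_posSemidef_ptransposeB_wernerState {p : ℝ} (hp : 1 / 3 < p) :
    ¬ (ptransposeB (wernerState p)).PosSemidef := by
  intro h
  have hnonneg := h.dotProduct_mulVec_nonneg (maxEntangledVec 2)
  rw [star_maxEntangledVec_dotProduct_ptransposeB_mulVec, sum_wernerState_apply_swap,
    Complex.zero_le_real] at hnonneg
  linarith

theorem werner_npt_and_entangled_general (p : ℝ) (hp₁ : 1 / 3 < p) :
    ¬ (ptransposeB (wernerState p)).PosSemidef ∧ ¬ IsSepState (wernerState p) :=
  ⟨not_posSemidef_ptransposeB_wernerState hp₁,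
    fun hsep => not_posSemidef_ptransposeB_wernerState hp₁ hsep.posSemidef_ptransposeB⟩

/-- For `1/3 < p ≤ 1`, the Werner state `ρ_p` has non-positive-semidefinite partial
transpose, and consequently is not separable. -/
theorem werner_npt_and_entangled (p : ℝ) (hp₁ : 1 / 3 < p) (hp₂ : p ≤ 1) :
    ¬ (ptransposeB (wernerState p)).PosSemidef ∧ ¬ IsSepState (wernerState p) :=
  werner_npt_and_entangled_general p hp₁
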